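/- Let n, p ≥ 1, η > 0, 0 < μ ≤ G, and let W ∈ ℝ^{n×n} be doubly stochastic with ρ := ‖W − (1/n)J_n‖ ≤ 1. For i = 1, …, n let H_i be a real symmetric p×p matrix with (1/G) I_p ⪯ H_i ⪯ (1/μ) I_p. Let θ', y ∈ ℝ^{np} with blocks θ'_i, y_i, let d ∈ ℝ^{np} be the vector with blocks d_i := H_i y_i, and set θ := (W ⊗ I_p)(θ' + η d). Then ‖θ − θ'‖² ≤ 9 ‖θ' − 𝟙_n⊗θ̄'‖² + (12η²ρ²/μ²) ‖y − 𝟙_n⊗ȳ‖² + (6G²η²/μ²) ‖d‖², where θ̄' and ȳ denote block averages. -/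

import Mathlib

open scoped BigOperators

/-- Spectral (ℓ²-operator) norm of a real matrix. -/
noncomputable def specNorm {n m : ℕ} (M : Matrix (Fin n) (Fin m) ℝ) : ℝ :=
  ‖LinearMap.toContinuousLinearMap (Matrix.toEuclideanLin M)‖

/-- ℝ^{np}, viewed as n blocks of size p, with the Euclidean norm. -/
abbrev BlockVec (n p : ℕ) : Type := PiLp 2 (fun _ : Fin n => EuclideanSpace ℝ (Fin p))

/-- Block average ā := (1/n) ∑ᵢ aᵢ. -/
noncomputable def blockAvg {n p : ℕ} (a : BlockVec n p) : EuclideanSpace ℝ (Fin p) :=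
  (n : ℝ)⁻¹ • ∑ i, a i

/-- 𝟙_n ⊗ x : the block vector all of whose blocks equal x. -/
def consensus {n p : ℕ} (x : EuclideanSpace ℝ (Fin p)) : BlockVec n p := WithLp.toLp 2 (fun _ => x)

/-- Action of W ⊗ I_p on a block vector. -/
noncomputable def kronApply {n p : ℕ} (W : Matrix (Fin n) (Fin n) ℝ) (a : BlockVec n p) :
    BlockVec n p := WithLp.toLp 2 (fun i => ∑ j, W i j • a j)

/-- The all-ones matrix J_n. -/
def onesMat (n : ℕ) : Matrix (Fin n) (Fin n) ℝ := Matrix.of fun _ _ => 1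

open scoped RealInnerProductSpace

section helpers
variable {n p : ℕ}

lemma kronApply_apply (M : Matrix (Fin n) (Fin n) ℝ) (a : BlockVec n p) (i : Fin n) :
    kronApply M a i = ∑ j, M i j • a j := rfl

lemma consensus_apply (x : EuclideanSpace ℝ (Fin p)) (i : Fin n) : consensus x i = x := rfl

lemma kronApply_add (M : Matrix (Fin n) (Fin n) ℝ) (a b : BlockVec n p) :
    kronApply M (a + b) = kronApply M a + kronApply M b := by
  refine PiLp.ext fun i => ?_
  show ∑ j, M i j • (a + b) j = (∑ j, M i j • a j) + ∑ j, M i j • b j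
  rw [← Finset.sum_add_distrib]
  refine Finset.sum_congr rfl fun j _ => ?_
  show M i j • (a j + b j) = _
  rw [smul_add]

lemma kronApply_smul (M : Matrix (Fin n) (Fin n) ℝ) (r : ℝ) (a : BlockVec n p) :
    kronApply M (r • a) = r • kronApply M a := by
  refine PiLp.ext fun i => ?_
  show ∑ j, M i j • (r • a) j = r • ∑ j, M i j • a j
  rw [Finset.smul_sum]
  refine Finset.sum_congr rfl fun j _ => ?_
  show M i j • (r • a j) = r • (M i j • a j)
  rw [smul_comm]

lemma kronApply_sub (M : Matrix (Fin n) (Fin n) ℝ) (a b : BlockVec n p) :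
    kronApply M (a - b) = kronApply M a - kronApply M b := by
  refine PiLp.ext fun i => ?_
  show ∑ j, M i j • (a - b) j = (∑ j, M i j • a j) - ∑ j, M i j • b j
  rw [← Finset.sum_sub_distrib]
  refine Finset.sum_congr rfl fun j _ => ?_
  show M i j • (a j - b j) = _
  rw [smul_sub]

lemma kron_decomp (W : Matrix (Fin n) (Fin n) ℝ) (a : BlockVec n p) :
    kronApply W a = consensus (blockAvg a) + kronApply (W - (n : ℝ)⁻¹ • onesMat n) a := by
  refine PiLp.ext fun i => ?_
  show ∑ j, W i j • a j = ((n : ℝ)⁻¹ • ∑ j, a j) + ∑ j, (W - (n : ℝ)⁻¹ • onesMat n) i j • a j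
  rw [Finset.smul_sum, ← Finset.sum_add_distrib]
  refine Finset.sum_congr rfl fun j _ => ?_
  have he : (W - (n : ℝ)⁻¹ • onesMat n) i j = W i j - (n : ℝ)⁻¹ := by
    simp [onesMat, Matrix.sub_apply, Matrix.smul_apply]
  rw [he, sub_smul]
  abel

lemma kron_consensus_row (W : Matrix (Fin n) (Fin n) ℝ)
    (hWrow : W.mulVec (fun _ => (1 : ℝ)) = fun _ => 1) (x : EuclideanSpace ℝ (Fin p)) :
    kronApply W (consensus x) = consensus x := by
  refine PiLp.ext fun i => ?_
  show ∑ j, W i j • x = x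
  rw [← Finset.sum_smul]
  have : ∑ j, W i j = 1 := by
    have := congrFun hWrow i
    simpa [Matrix.mulVec, dotProduct] using this
  rw [this, one_smul]

lemma blockAvg_consensus (hn : 1 ≤ n) (x : EuclideanSpace ℝ (Fin p)) :
    blockAvg (consensus x : BlockVec n p) = x := by
  have hn0 : (n : ℝ) ≠ 0 := Nat.cast_ne_zero.2 (by omega)
  show (n : ℝ)⁻¹ • ∑ _i : Fin n, x = x
  rw [Finset.sum_const, Finset.card_univ, Fintype.card_fin, ← Nat.cast_smul_eq_nsmul ℝ, smul_smul,
    inv_mul_cancel₀ hn0, one_smul]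

lemma blockAvg_sub (a b : BlockVec n p) : blockAvg (a - b) = blockAvg a - blockAvg b := by
  show (n : ℝ)⁻¹ • ∑ i, (a - b) i = _
  have : ∑ i, (a - b) i = (∑ i, a i) - ∑ i, b i := by
    rw [← Finset.sum_sub_distrib]
    exact Finset.sum_congr rfl fun i _ => rfl
  rw [this, smul_sub]
  rfl

lemma kron_D_consensus (W : Matrix (Fin n) (Fin n) ℝ) (hn : 1 ≤ n)
    (hWrow : W.mulVec (fun _ => (1 : ℝ)) = fun _ => 1) (x : EuclideanSpace ℝ (Fin p)) :
    kronApply (W - (n : ℝ)⁻¹ • onesMat n) (consensus x) = 0 := by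
  have hn0 : (n : ℝ) ≠ 0 := Nat.cast_ne_zero.2 (by omega)
  refine PiLp.ext fun i => ?_
  show ∑ j, (W - (n : ℝ)⁻¹ • onesMat n) i j • x = 0
  rw [← Finset.sum_smul]
  have hrow : ∑ j, W i j = 1 := by
    have := congrFun hWrow i
    simpa [Matrix.mulVec, dotProduct] using this
  have : ∑ j, (W - (n : ℝ)⁻¹ • onesMat n) i j = 0 := by
    have he : ∀ j, (W - (n : ℝ)⁻¹ • onesMat n) i j = W i j - (n : ℝ)⁻¹ := fun j => by
      simp [onesMat, Matrix.sub_apply, Matrix.smul_apply]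
    rw [Finset.sum_congr rfl fun j _ => he j, Finset.sum_sub_distrib, hrow,
      Finset.sum_const, Finset.card_univ, Fintype.card_fin, nsmul_eq_mul,
      mul_inv_cancel₀ hn0, sub_self]
  rw [this, zero_smul]

lemma blockAvg_kron_D (W : Matrix (Fin n) (Fin n) ℝ) (hn : 1 ≤ n)
    (hWcol : Matrix.vecMul (fun _ => (1 : ℝ)) W = fun _ => 1) (a : BlockVec n p) :
    blockAvg (kronApply (W - (n : ℝ)⁻¹ • onesMat n) a) = 0 := by
  have hn0 : (n : ℝ) ≠ 0 := Nat.cast_ne_zero.2 (by omega)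
  show (n : ℝ)⁻¹ • ∑ i, ∑ j, (W - (n : ℝ)⁻¹ • onesMat n) i j • a j = 0
  rw [Finset.sum_comm]
  have : ∀ j : Fin n, ∑ i, (W - (n : ℝ)⁻¹ • onesMat n) i j • a j = 0 := by
    intro j
    rw [← Finset.sum_smul]
    have hcol : ∑ i, W i j = 1 := by
      have := congrFun hWcol j
      simpa [Matrix.vecMul, dotProduct] using this
    have : ∑ i, (W - (n : ℝ)⁻¹ • onesMat n) i j = 0 := by
      have he : ∀ i, (W - (n : ℝ)⁻¹ • onesMat n) i j = W i j - (n : ℝ)⁻¹ := fun i => by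
        simp [onesMat, Matrix.sub_apply, Matrix.smul_apply]
      rw [Finset.sum_congr rfl fun i _ => he i, Finset.sum_sub_distrib, hcol,
        Finset.sum_const, Finset.card_univ, Fintype.card_fin, nsmul_eq_mul,
        mul_inv_cancel₀ hn0, sub_self]
    rw [this, zero_smul]
  rw [Finset.sum_congr rfl fun j _ => this j, Finset.sum_const, smul_zero, smul_zero]

lemma inner_consensus_eq_zero (hn : 1 ≤ n) (x : EuclideanSpace ℝ (Fin p)) (a : BlockVec n p)
    (ha : blockAvg a = 0) : ⟪consensus x, a⟫ = 0 := by
  have hn0 : (n : ℝ) ≠ 0 := Nat.cast_ne_zero.2 (by omega)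
  rw [PiLp.inner_apply]
  have hsum : ∑ i, a i = 0 := by
    have : (n : ℝ) • blockAvg a = (n : ℝ) • (0 : EuclideanSpace ℝ (Fin p)) := by rw [ha]
    rwa [blockAvg, smul_smul, mul_inv_cancel₀ hn0, one_smul, smul_zero] at this
  calc ∑ i, ⟪consensus x i, a i⟫ = ⟪x, ∑ i, a i⟫ := by
        rw [inner_sum]
        exact Finset.sum_congr rfl fun i _ => rfl
    _ = 0 := by rw [hsum, inner_zero_right]

end helpers

lemma specNorm_nonneg {n m : ℕ} (M : Matrix (Fin n) (Fin m) ℝ) : 0 ≤ specNorm M :=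
  norm_nonneg _

lemma kron_coord {n p : ℕ} (M : Matrix (Fin n) (Fin n) ℝ) (a : BlockVec n p) (i : Fin n)
    (k : Fin p) : kronApply M a i k = ∑ j, M i j * a j k := by
  have h : (∑ j, M i j • a j : EuclideanSpace ℝ (Fin p)) k = ∑ j, (M i j • a j) k :=
    by rw [WithLp.ofLp_sum, Finset.sum_apply]
  simpa [kronApply] using h

lemma blockvec_norm_sq {n p : ℕ} (a : BlockVec n p) : ‖a‖ ^ 2 = ∑ i, ∑ k, (a i k) ^ 2 := by
  rw [PiLp.norm_sq_eq_of_L2]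
  refine Finset.sum_congr rfl fun i _ => ?_
  rw [PiLp.norm_sq_eq_of_L2]
  refine Finset.sum_congr rfl fun k _ => ?_
  rw [Real.norm_eq_abs, sq_abs]

lemma euc_norm_sq {q : ℕ} (w : EuclideanSpace ℝ (Fin q)) : ‖w‖ ^ 2 = ∑ k, (w k) ^ 2 := by
  rw [PiLp.norm_sq_eq_of_L2]
  refine Finset.sum_congr rfl fun k _ => ?_
  rw [Real.norm_eq_abs, sq_abs]

lemma mulVec_norm_le {n m : ℕ} (M : Matrix (Fin n) (Fin m) ℝ) (w : EuclideanSpace ℝ (Fin m)) :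
    ‖(WithLp.equiv 2 (Fin n → ℝ)).symm (M.mulVec (WithLp.equiv 2 (Fin m → ℝ) w))‖
      ≤ specNorm M * ‖w‖ := by
  exact (LinearMap.toContinuousLinearMap (Matrix.toEuclideanLin M)).le_opNorm w

lemma kron_norm_le {n p : ℕ} (M : Matrix (Fin n) (Fin n) ℝ) (a : BlockVec n p) :
    ‖kronApply M a‖ ≤ specNorm M * ‖a‖ := by
  have hr : 0 ≤ specNorm M * ‖a‖ := mul_nonneg (specNorm_nonneg M) (norm_nonneg a)
  refine le_of_pow_le_pow_left₀ two_ne_zero hr ?_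
  have key : ‖kronApply M a‖ ^ 2 = ∑ k, ‖(WithLp.equiv 2 (Fin n → ℝ)).symm
      (M.mulVec (fun j => a j k))‖ ^ 2 := by
    rw [blockvec_norm_sq, Finset.sum_comm]
    refine Finset.sum_congr rfl fun k _ => ?_
    rw [euc_norm_sq]
    refine Finset.sum_congr rfl fun i _ => ?_
    rw [kron_coord]
    rfl
  rw [key, mul_pow]
  calc ∑ k, ‖(WithLp.equiv 2 (Fin n → ℝ)).symm (M.mulVec (fun j => a j k))‖ ^ 2
      ≤ ∑ k : Fin p, (specNorm M) ^ 2 * ‖(WithLp.equiv 2 (Fin n → ℝ)).symm (fun j => a j k)‖ ^ 2 := by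
        refine Finset.sum_le_sum fun k _ => ?_
        rw [← mul_pow]
        refine pow_le_pow_left₀ (norm_nonneg _) ?_ 2
        exact mulVec_norm_le M (WithLp.toLp 2 (fun j => a j k))
    _ = specNorm M ^ 2 * ‖a‖ ^ 2 := by
        rw [← Finset.mul_sum, blockvec_norm_sq, Finset.sum_comm]
        congr 1
        refine Finset.sum_congr rfl fun k _ => ?_
        rw [euc_norm_sq]
        rfl

section main
open scoped RealInnerProductSpace
variable {n p : ℕ}

lemma kron_W_contract (W : Matrix (Fin n) (Fin n) ℝ) (hn : 1 ≤ n)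
    (hWrow : W.mulVec (fun _ => (1 : ℝ)) = fun _ => 1)
    (hWcol : Matrix.vecMul (fun _ => (1 : ℝ)) W = fun _ => 1)
    (ρ : ℝ) (hρdef : ρ = specNorm (W - (n : ℝ)⁻¹ • onesMat n)) (hρ : ρ ≤ 1)
    (a : BlockVec n p) : ‖kronApply W a‖ ≤ ‖a‖ := by
  set D := W - (n : ℝ)⁻¹ • onesMat n with hD
  set c := consensus (blockAvg a) with hc
  have hρ0 : 0 ≤ ρ := hρdef ▸ specNorm_nonneg _
  have hdecomp : kronApply W a = c + kronApply D a := kron_decomp W a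
  have he : kronApply D a = kronApply D (a - c) := by
    rw [kronApply_sub, kron_D_consensus W hn hWrow, sub_zero]
  have hDe : ‖kronApply D a‖ ≤ ρ * ‖a - c‖ := by
    rw [he, hρdef]; exact kron_norm_le D _
  have hinner1 : ⟪c, kronApply D a⟫ = 0 :=
    inner_consensus_eq_zero hn _ _ (blockAvg_kron_D W hn hWcol a)
  have hinner2 : ⟪c, a - c⟫ = 0 :=
    inner_consensus_eq_zero hn _ _
      (by rw [blockAvg_sub, hc, blockAvg_consensus hn, sub_self])
  have h1 : ‖kronApply W a‖ ^ 2 = ‖c‖ ^ 2 + ‖kronApply D a‖ ^ 2 := by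
    rw [hdecomp, norm_add_sq_real, hinner1]; ring
  have hrw : c + (a - c) = a := by abel
  have h2 : ‖a‖ ^ 2 = ‖c‖ ^ 2 + ‖a - c‖ ^ 2 := by
    calc ‖a‖ ^ 2 = ‖c + (a - c)‖ ^ 2 := by rw [hrw]
      _ = ‖c‖ ^ 2 + ‖a - c‖ ^ 2 := by rw [norm_add_sq_real, hinner2]; ring
  have hsq : ‖kronApply W a‖ ^ 2 ≤ ‖a‖ ^ 2 := by
    have hd2 : ‖kronApply D a‖ ^ 2 ≤ ‖a - c‖ ^ 2 := by
      calc ‖kronApply D a‖ ^ 2 ≤ (ρ * ‖a - c‖) ^ 2 :=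
            pow_le_pow_left₀ (norm_nonneg _) hDe 2
        _ ≤ ‖a - c‖ ^ 2 := by
            have h1ρ : 0 ≤ (1 - ρ) * (1 + ρ) * ‖a - c‖ ^ 2 :=
              mul_nonneg (mul_nonneg (by linarith) (by linarith)) (sq_nonneg _)
            nlinarith [h1ρ]
    linarith
  exact le_of_pow_le_pow_left₀ two_ne_zero (norm_nonneg a) hsq

set_option maxHeartbeats 1000000 in
theorem stmt4
    (n p : ℕ) (hn : 1 ≤ n) (hp : 1 ≤ p)
    (η G μ : ℝ) (hη : 0 < η) (hμ : 0 < μ) (hμG : μ ≤ G)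
    (W : Matrix (Fin n) (Fin n) ℝ)
    (hWrow : W.mulVec (fun _ => (1 : ℝ)) = fun _ => 1)
    (hWcol : Matrix.vecMul (fun _ => (1 : ℝ)) W = fun _ => 1)
    (ρ : ℝ) (hρdef : ρ = specNorm (W - (n : ℝ)⁻¹ • onesMat n)) (hρ : ρ ≤ 1)
    (H : Fin n → Matrix (Fin p) (Fin p) ℝ)
    (hHsymm : ∀ i, (H i).IsSymm)
    (hHlow : ∀ i, (H i - G⁻¹ • 1).PosSemidef)
    (hHup : ∀ i, ((μ⁻¹ • (1 : Matrix (Fin p) (Fin p) ℝ)) - H i).PosSemidef)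
    (θ' y d θ : BlockVec n p)
    (hd : ∀ i, d i = (H i).mulVec (y i))
    (hθ : θ = kronApply W (θ' + η • d)) :
    ‖θ - θ'‖ ^ 2 ≤
      9 * ‖θ' - consensus (blockAvg θ')‖ ^ 2
      + 12 * η ^ 2 * ρ ^ 2 / μ ^ 2 * ‖y - consensus (blockAvg y)‖ ^ 2
      + 6 * G ^ 2 * η ^ 2 / μ ^ 2 * ‖d‖ ^ 2 := by
  set v := θ' - consensus (blockAvg θ') with hv
  have h3 : kronApply W v = kronApply W θ' - consensus (blockAvg θ') := by
    rw [hv, kronApply_sub, kron_consensus_row W hWrow]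
  have hθdecomp : θ - θ' = (kronApply W v - v) + η • kronApply W d := by
    rw [hθ, kronApply_add, kronApply_smul, h3, hv]; abel
  have hWv : ‖kronApply W v‖ ≤ ‖v‖ := kron_W_contract W hn hWrow hWcol ρ hρdef hρ v
  have hWd : ‖kronApply W d‖ ≤ ‖d‖ := kron_W_contract W hn hWrow hWcol ρ hρdef hρ d
  have hb : ‖θ - θ'‖ ≤ 2 * ‖v‖ + η * ‖d‖ := by
    rw [hθdecomp]
    calc ‖(kronApply W v - v) + η • kronApply W d‖
        ≤ ‖kronApply W v - v‖ + ‖η • kronApply W d‖ := norm_add_le _ _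
      _ ≤ (‖kronApply W v‖ + ‖v‖) + η * ‖kronApply W d‖ := by
          rw [norm_smul, Real.norm_eq_abs, abs_of_pos hη]
          exact add_le_add_left (norm_sub_le _ _) _
      _ ≤ 2 * ‖v‖ + η * ‖d‖ := by
          have := mul_le_mul_of_nonneg_left hWd (le_of_lt hη)
          linarith
  have hA2 : ‖θ - θ'‖ ^ 2 ≤ (2 * ‖v‖ + η * ‖d‖) ^ 2 :=
    pow_le_pow_left₀ (norm_nonneg _) hb 2
  have hmid : 0 ≤ 12 * η ^ 2 * ρ ^ 2 / μ ^ 2 * ‖y - consensus (blockAvg y)‖ ^ 2 := by positivity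
  have hlast : 6 * η ^ 2 * ‖d‖ ^ 2 ≤ 6 * G ^ 2 * η ^ 2 / μ ^ 2 * ‖d‖ ^ 2 := by
    apply mul_le_mul_of_nonneg_right _ (sq_nonneg _)
    rw [le_div_iff₀ (by positivity)]
    have hG2 : μ ^ 2 ≤ G ^ 2 := by nlinarith
    nlinarith [mul_nonneg (sq_nonneg η) (sub_nonneg.2 hG2)]
  have hpoly : (2 * ‖v‖ + η * ‖d‖) ^ 2 ≤ 9 * ‖v‖ ^ 2 + 6 * η ^ 2 * ‖d‖ ^ 2 := by
    nlinarith [sq_nonneg (‖v‖ - η * ‖d‖), norm_nonneg v, norm_nonneg d, sq_nonneg (η * ‖d‖)]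
  linarith

end main
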